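/- arXiv:1707.04793 — 7 statements merged into one kernel-verified Lean document; each statement's English description precedes it below -/
import Mathlib

section
/- Let d ≥ 2. Given rational numbers a_0, a_1, ..., a_{d-1} with a_0 ≠ 0, there exists a nonzero rational number a_d such that the polynomial a_d x^d + ... + a_1 x + a_0 has no rational root. -/
/-! Write `N a_j = c_j` with `c_j ∈ ℤ` and pick a prime `p ∤ c_0`. With `a_d = 1 / (p N)`, the
polynomial times `p N` is `x^d + p (c_{d-1} x^{d-1} + ⋯ + c_0)`, which is Eisenstein at `p`: at a
root `u / v` in lowest terms, `p ∣ u`, so `p² ∣ u^d` forces `p ∣ c_0 v^d` and hence `p ∣ v`. -/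

open Finset

theorem Rat.exists_nat_mul_eq_intCast {ι : Type*} (s : Finset ι) (a : ι → ℚ) :
    ∃ N : ℕ, N ≠ 0 ∧ ∃ c : ι → ℤ, ∀ i ∈ s, (c i : ℚ) = N * a i := by
  refine ⟨∏ i ∈ s, (a i).den, prod_ne_zero_iff.mpr fun i _ => (a i).den_nz,
    fun i => (a i).num * ((∏ i ∈ s, (a i).den) / (a i).den : ℕ), fun i hi => ?_⟩
  obtain ⟨k, hk⟩ := dvd_prod_of_mem (fun i => (a i).den) hi
  simp only [hk, Nat.mul_div_cancel_left _ (a i).pos]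
  push_cast
  rw [← Rat.den_mul_eq_num]
  ring

theorem Int.exists_prime_not_dvd {n : ℤ} (hn : n ≠ 0) : ∃ p : ℤ, Prime p ∧ ¬p ∣ n := by
  obtain ⟨p, hle, hp⟩ := Nat.exists_infinite_primes (n.natAbs + 1)
  refine ⟨p, Nat.prime_iff_prime_int.mp hp, fun h => ?_⟩
  have := Int.natAbs_le_of_dvd_ne_zero h hn
  simp only [Int.natAbs_natCast] at this
  omega

theorem pow_add_prime_mul_homogeneous_sum_ne_zero {p : ℤ} (hp : Prime p) {c : ℕ → ℤ}
    (hc : ¬p ∣ c 0) {d : ℕ} (hd : 2 ≤ d) {u v : ℤ} (huv : IsCoprime u v) :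
    u ^ d + p * ∑ j ∈ range d, c j * u ^ j * v ^ (d - j) ≠ 0 := by
  intro h
  set S := ∑ j ∈ range d, c j * u ^ j * v ^ (d - j) with hS
  have hpu : p ∣ u := hp.dvd_of_dvd_pow (n := d) ⟨-S, by linear_combination h⟩
  have hpS : p ∣ S := by
    have hud : u ^ d = p * -S := by linear_combination h
    have hp2 : p * p ∣ p * -S :=
      sq p ▸ hud ▸ (pow_dvd_pow_of_dvd hpu 2).trans (pow_dvd_pow u hd)
    exact dvd_neg.mp ((mul_dvd_mul_iff_left hp.ne_zero).mp hp2)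
  obtain ⟨n, rfl⟩ : ∃ n, d = n + 1 := ⟨d - 1, by omega⟩
  have hp0 : p ∣ c 0 * v ^ (n + 1) := by
    have htail : p ∣ ∑ j ∈ range n, c (j + 1) * u ^ (j + 1) * v ^ (n + 1 - (j + 1)) :=
      dvd_sum fun j _ => ((dvd_pow hpu j.succ_ne_zero).mul_left _).mul_right _
    rw [hS, sum_range_succ'] at hpS
    simpa using (dvd_add_right htail).mp hpS
  have hpv : p ∣ v := hp.dvd_of_dvd_pow ((hp.dvd_or_dvd hp0).resolve_left hc)
  exact hp.not_isUnit (huv.isUnit_of_dvd' hpu hpv)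

theorem pow_add_prime_mul_sum_ne_zero {p : ℤ} (hp : Prime p) {c : ℕ → ℤ} (hc : ¬p ∣ c 0)
    {d : ℕ} (hd : 2 ≤ d) (r : ℚ) : r ^ d + p * ∑ j ∈ range d, (c j : ℚ) * r ^ j ≠ 0 := by
  have hhom : (r.den : ℚ) ^ d * (r ^ d + p * ∑ j ∈ range d, (c j : ℚ) * r ^ j) =
      ((r.num ^ d + p * ∑ j ∈ range d, c j * r.num ^ j * (r.den : ℤ) ^ (d - j) : ℤ) : ℚ) := by
    push_cast
    rw [mul_add, mul_left_comm, mul_sum]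
    congr 2
    · rw [← Rat.mul_den_eq_num, mul_pow, mul_comm]
    · refine sum_congr rfl fun j hj => ?_
      rw [← pow_mul_pow_sub _ (mem_range.mp hj).le, ← Rat.mul_den_eq_num, mul_pow]
      ring
  intro h
  rw [h, mul_zero, eq_comm, Int.cast_eq_zero] at hhom
  exact pow_add_prime_mul_homogeneous_sum_ne_zero hp hc hd r.isCoprime_num_den hhom

theorem stmt_2 (d : ℕ) (hd : 2 ≤ d) (a : ℕ → ℚ) (h0 : a 0 ≠ 0) :
    ∃ ad : ℚ, ad ≠ 0 ∧
      ∀ r : ℚ, ad * r ^ d + ∑ j ∈ Finset.range d, a j * r ^ j ≠ 0 := by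
  obtain ⟨N, hN, c, hc⟩ := Rat.exists_nat_mul_eq_intCast (range d) a
  have hc0 : c 0 ≠ 0 := by
    have := hc 0 (mem_range.mpr (by omega))
    exact_mod_cast this ▸ mul_ne_zero (Nat.cast_ne_zero.mpr hN) h0
  obtain ⟨p, hp, hpc⟩ := Int.exists_prime_not_dvd hc0
  have hpN : (p * N : ℚ) ≠ 0 :=
    mul_ne_zero (Int.cast_ne_zero.mpr hp.ne_zero) (Nat.cast_ne_zero.mpr hN)
  refine ⟨1 / (p * N), one_div_ne_zero hpN,
    fun r hr => pow_add_prime_mul_sum_ne_zero hp hpc hd r ?_⟩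
  calc r ^ d + p * ∑ j ∈ range d, (c j : ℚ) * r ^ j
      = p * N * (1 / (p * N) * r ^ d + ∑ j ∈ range d, a j * r ^ j) := by
        rw [mul_add, ← mul_assoc, mul_one_div_cancel hpN, one_mul, mul_assoc]
        congr 2
        rw [mul_sum]
        exact sum_congr rfl fun j hj => by rw [hc j hj, mul_assoc]
    _ = 0 := by rw [hr, mul_zero]
end

section
/- Let R be a UFD with field of fractions K, and let f(x) = a_d x^d + ... + a_0 ∈ K[x] with a_d a_0 ≠ 0, where the coefficients a_j for j ≠ i are fixed (for some fixed i with 0 < i < d). Then there is a finite set {y_1, ..., y_m} ⊆ K, independent of the choice of a_i ∈ R, such that any root z ∈ K of f satisfies z = u·y_j for some j and some unit u of R. -/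
/-!
Clearing denominators turns `f` into a polynomial over `R` whose constant and leading
coefficients do not depend on `a_i`. By the rational root theorem, the numerator and
denominator of a root divide these two fixed nonzero elements, and in a UFD a nonzero element
has only finitely many divisors up to units.
-/

open Polynomial IsFractionRing

theorem Associates.finite_setOf_dvd {α : Type*} [CommMonoidWithZero α]
    [UniqueFactorizationMonoid α] {y : Associates α} (hy : y ≠ 0) : {x | x ∣ y}.Finite :=
  @Finite.of_fintype _ (UniqueFactorizationMonoid.fintypeSubtypeDvd y hy)

theorem exists_finset_forall_dvd_div_eq_unit_mul {R K : Type*} [CommRing R] [IsDomain R]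
    [UniqueFactorizationMonoid R] [Field K] [Algebra R K] {p q : R} (hp : p ≠ 0) (hq : q ≠ 0) :
    ∃ Y : Finset K, ∀ n m : R, n ∣ p → m ∣ q →
      ∃ y ∈ Y, ∃ u : Rˣ, algebraMap R K n / algebraMap R K m = algebraMap R K u * y := by
  classical
  have hfin (e : R) (he : e ≠ 0) := Associates.finite_setOf_dvd (Associates.mk_ne_zero.mpr he)
  refine ⟨((hfin p hp).toFinset ×ˢ (hfin q hq).toFinset).image fun x =>
    algebraMap R K (Quot.out x.1) / algebraMap R K (Quot.out x.2), fun n m hn hm => ?_⟩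
  obtain ⟨v, hv⟩ := Associates.mk_quot_out n
  obtain ⟨w, hw⟩ := Associates.mk_quot_out m
  refine ⟨_, Finset.mem_image_of_mem _ (a := (Associates.mk n, Associates.mk m))
    (Finset.mem_product.mpr ⟨(hfin p hp).mem_toFinset.mpr (Associates.mk_dvd_mk.mpr hn),
      (hfin q hq).mem_toFinset.mpr (Associates.mk_dvd_mk.mpr hm)⟩), v * w⁻¹, ?_⟩
  have hwinv : algebraMap R K ↑w⁻¹ = (algebraMap R K w)⁻¹ :=
    eq_inv_of_mul_eq_one_left (by rw [← map_mul, Units.inv_mul, map_one])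
  conv_lhs => rw [← hv, ← hw]
  simp only [Units.val_mul, map_mul, hwinv]
  ring

theorem num_dvd_and_den_dvd_of_sum_eq_zero {R K : Type*} [CommRing R] [IsDomain R]
    [UniqueFactorizationMonoid R] [Field K] [Algebra R K] [IsFractionRing R K] {d : ℕ}
    {s : ℕ → R} (hd : s d ≠ 0) {z : K}
    (hz : ∑ j ∈ Finset.range (d + 1), algebraMap R K (s j) * z ^ j = 0) :
    num R z ∣ s 0 ∧ (den R z : R) ∣ s d := by
  set p : R[X] := ∑ j ∈ Finset.range (d + 1), monomial j (s j)
  have hcoeff (k : ℕ) (hk : k ≤ d) : p.coeff k = s k := by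
    simp [p, coeff_monomial, Nat.lt_succ_iff.mpr hk]
  have hdeg : p.natDegree = d := by
    refine natDegree_eq_of_le_of_coeff_ne_zero ?_ (hcoeff d le_rfl ▸ hd)
    exact natDegree_sum_le_of_forall_le _ _ fun j hj => (natDegree_monomial_le _).trans
      (Nat.lt_succ_iff.mp (Finset.mem_range.mp hj))
  have hroot : aeval z p = 0 := by simpa [p, aeval_monomial] using hz
  refine ⟨hcoeff 0 d.zero_le ▸ num_dvd_of_is_root hroot, ?_⟩
  rw [← hcoeff d le_rfl, ← hdeg]
  exact den_dvd_of_is_root hroot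

theorem stmt_4 (R : Type*) [CommRing R] [IsDomain R] [UniqueFactorizationMonoid R]
    (K : Type*) [Field K] [Algebra R K] [IsFractionRing R K]
    (d i : ℕ) (hi0 : 0 < i) (hid : i < d)
    (a : ℕ → K) (h0 : a 0 ≠ 0) (hdd : a d ≠ 0) :
    ∃ Y : Finset K, ∀ c : R, ∀ z : K,
      (∑ j ∈ Finset.range (d + 1), Function.update a i (algebraMap R K c) j * z ^ j = 0) →
      ∃ y ∈ Y, ∃ u : Rˣ, z = algebraMap R K (u : R) * y := by
  obtain ⟨b, hb⟩ := IsLocalization.exist_integer_multiples (nonZeroDivisors R)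
    (Finset.range (d + 1)) a
  choose! r hr using hb
  have hbK : algebraMap R K b ≠ 0 := IsFractionRing.to_map_ne_zero_of_mem_nonZeroDivisors b.2
  have hr_ne {j : ℕ} (hj : j ≤ d) (ha : a j ≠ 0) : r j ≠ 0 :=
    ne_zero_of_map (f := algebraMap R K) <| by
      rw [hr j (Finset.mem_range_succ_iff.mpr hj), Algebra.smul_def]
      exact mul_ne_zero hbK ha
  obtain ⟨Y, hY⟩ :=
    exists_finset_forall_dvd_div_eq_unit_mul (K := K) (hr_ne d.zero_le h0) (hr_ne le_rfl hdd)
  refine ⟨Y, fun c z hz => ?_⟩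
  set s := Function.update r i (b * c)
  have hs (j : ℕ) (hj : j ∈ Finset.range (d + 1)) :
      algebraMap R K (s j) = algebraMap R K b * Function.update a i (algebraMap R K c) j := by
    rcases eq_or_ne j i with rfl | hji
    · simp [s]
    · simp [s, hji, hr j hj, Algebra.smul_def]
  obtain ⟨hnum, hden⟩ := num_dvd_and_den_dvd_of_sum_eq_zero (d := d) (s := s) (z := z)
    (by simpa [s, hid.ne'] using hr_ne le_rfl hdd) <| by
      simp_rw [Finset.sum_congr rfl fun j hj => congrArg (· * z ^ j) (hs j hj), mul_assoc,
        ← Finset.mul_sum, hz, mul_zero]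
  rw [← mk'_num_den' R z]
  exact hY _ _ (by simpa [s, hi0.ne] using hnum) (by simpa [s, hid.ne'] using hden)
end

section
/- Let K be a finite extension of ℚ with ring of integers A. There exists a nonzero integer N such that the localization A[1/N] is a principal ideal domain (hence a UFD). -/
/-! Choose representatives `I_c` of the finitely many ideal classes of `A = 𝓞 K` and let `N` be the
absolute norm of their product, so that `N ∈ I_c` for every `c`. For a nonzero ideal `P` of `A`
in the class `c` there are nonzero `x, y` with `(x) I_c = (y) P`; in `A[1/N]` the ideal `I_c`
becomes the unit ideal, so `(x) = (y) P` there and `P = (x / y)` is principal. -/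

open NumberField
open scoped nonZeroDivisors

namespace Ideal

variable {R : Type*} [CommRing R]

theorem isPrincipal_of_span_singleton_eq_span_singleton_mul [IsDomain R] {x y : R}
    {J : Ideal R} (hy : y ≠ 0) (h : span {x} = span {y} * J) : J.IsPrincipal := by
  obtain ⟨z, -, rfl⟩ := mem_span_singleton_mul.mp (h ▸ mem_span_singleton_self x)
  refine ⟨z, (span_singleton_mul_right_inj hy).mp ?_⟩
  rw [← h, span_singleton_mul_span_singleton]

theorem exists_natCast_ne_zero_mem_of_nonZeroDivisors [IsDedekindDomain R] [Module.Free ℤ R]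
    [Module.Finite ℤ R] {ι : Type*} [Fintype ι] (I : ι → (Ideal R)⁰) :
    ∃ n : ℕ, n ≠ 0 ∧ ∀ i, (n : R) ∈ (I i : Ideal R) := by
  classical
  let J : (Ideal R)⁰ := ∏ i, I i
  refine ⟨absNorm (J : Ideal R), absNorm_ne_zero_of_nonZeroDivisors J, fun i => ?_⟩
  have hJ : (J : Ideal R) ≤ I i := by
    rw [Submonoid.coe_finsetProd]
    exact le_of_dvd (Finset.dvd_prod_of_mem _ (Finset.mem_univ i))
  exact hJ (absNorm_mem _)

end Ideal

section Localization

variable {A R : Type*} [CommRing A] [IsDedekindDomain A] [CommRing R] [Algebra A R]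

theorem Ideal.isPrincipal_map_of_mk0_eq_mk0 [IsDomain R]
    (hinj : Function.Injective (algebraMap A R)) {I J : (Ideal A)⁰}
    (hIJ : ClassGroup.mk0 I = ClassGroup.mk0 J) (hI : (I : Ideal A).map (algebraMap A R) = ⊤) :
    ((J : Ideal A).map (algebraMap A R)).IsPrincipal := by
  obtain ⟨x, y, -, hy, hxy⟩ := ClassGroup.mk0_eq_mk0_iff.mp hIJ
  refine isPrincipal_of_span_singleton_eq_span_singleton_mul
    (x := algebraMap A R x) ((map_ne_zero_iff _ hinj).mpr hy) ?_
  simpa only [Ideal.map_mul, Ideal.map_span, Set.image_singleton, hI, Ideal.mul_top] using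
    congrArg (map (algebraMap A R)) hxy

theorem IsLocalization.isPrincipalIdealRing_of_forall_exists_mem {S : Submonoid A}
    (hS : S ≤ A⁰) [IsLocalization S R]
    (h : ∀ c : ClassGroup A, ∃ I : (Ideal A)⁰, ClassGroup.mk0 I = c ∧ ∃ s ∈ S, s ∈ (I : Ideal A)) :
    IsPrincipalIdealRing R := by
  have : IsDomain R := isDomain_of_le_nonZeroDivisors R hS
  refine ⟨fun P => ?_⟩
  by_cases hP : P = ⊥
  · exact hP ▸ bot_isPrincipal
  have hp : P.under A ∈ (Ideal A)⁰ := mem_nonZeroDivisors_of_ne_zero fun h => hP <| by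
    rw [← map_under S R P, h, Submodule.zero_eq_bot, Ideal.map_bot]
  obtain ⟨I, hI, s, hsS, hsI⟩ := h (ClassGroup.mk0 ⟨_, hp⟩)
  have hItop : (I : Ideal A).map (algebraMap A R) = ⊤ :=
    Ideal.eq_top_of_isUnit_mem _ (Ideal.mem_map_of_mem _ hsI) (map_units R ⟨s, hsS⟩)
  simpa only [map_under S R P] using
    Ideal.isPrincipal_map_of_mk0_eq_mk0 (IsLocalization.injective R hS) hI hItop

end Localization

theorem stmt_6 (K : Type*) [Field K] [NumberField K] :
    ∃ N : ℤ, N ≠ 0 ∧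
      IsPrincipalIdealRing (Localization.Away ((N : NumberField.RingOfIntegers K))) := by
  choose I hI using ClassGroup.mk0_surjective (R := 𝓞 K)
  obtain ⟨n, hn, hmem⟩ := Ideal.exists_natCast_ne_zero_mem_of_nonZeroDivisors I
  have hn' : ((n : ℤ) : 𝓞 K) ≠ 0 := by exact_mod_cast hn
  refine ⟨n, by exact_mod_cast hn, ?_⟩
  exact IsLocalization.isPrincipalIdealRing_of_forall_exists_mem
    (powers_le_nonZeroDivisors_of_noZeroDivisors hn') fun c =>
      ⟨I c, hI c, _, Submonoid.mem_powers _, by exact_mod_cast hmem c⟩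
end

section
/- Let 𝔽_q have characteristic 3 and let a ∈ 𝔽_q be a non-square. Then the map x ↦ x³ - a x is a bijection of 𝔽_q. -/
theorem stmt_12 (F : Type*) [Field F] [Fintype F] [CharP F 3]
    (a : F) (ha : ¬ IsSquare a) :
    Function.Bijective (fun x : F => x ^ 3 - a * x) := by
  apply Finite.injective_iff_bijective.mp
  intro x y h
  simp only at h
  have h3 : (3 : F) = 0 := CharP.cast_eq_zero F 3
  have hz : (x - y) ^ 3 - a * (x - y) = 0 := by
    linear_combination h + (x * y ^ 2 - x ^ 2 * y) * h3
  by_contra hne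
  have hxy : x - y ≠ 0 := sub_ne_zero.mpr (fun e => hne e)
  have hsq : (x - y) ^ 2 = a := by
    have : (x - y) * ((x - y) ^ 2 - a) = 0 := by ring_nf; linear_combination hz
    rcases mul_eq_zero.mp this with h1 | h2
    · exact absurd h1 hxy
    · exact sub_eq_zero.mp h2
  exact ha ⟨x - y, by rw [← hsq]; ring⟩
end

section
/- Let 𝔽_q have characteristic not equal to 3, and let g(x) = a_3 x³ + a_2 x² + a_1 x ∈ 𝔽_q[x] with a_3 ≠ 0 and exactly one of a_2, a_1 equal to 0. Then g is not a permutation polynomial of 𝔽_q, i.e., the map x ↦ g(x) is not surjective. -/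
/-! A self-map of a finite set is surjective iff it is injective, and
`g x - g y = (x - y) * (a₃ (x² + x y + y²) + a₂ (x + y) + a₁)`. If `a₁ = 0` then `g` vanishes at `0`
and at `-a₂ / a₃ ≠ 0`. If `a₂ = 0` it suffices to represent `-a₁ / a₃ ≠ 0` by the form
`x² + x y + y²` with `x ≠ y`: over a finite field of characteristic `≠ 3` this form represents
everything, and a representation with `x = y` can be traded for `(-2x, x)` unless `3x = 0`. -/

open Polynomial Function

theorem not_injective_cubic_of_eq_zero {R : Type*} [CommRing R] {a3 a2 a1 x y : R} (hxy : x ≠ y)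
    (h : a3 * (x ^ 2 + x * y + y ^ 2) + a2 * (x + y) + a1 = 0) :
    ¬ Injective (fun x : R => a3 * x ^ 3 + a2 * x ^ 2 + a1 * x) :=
  fun hinj => hxy <| hinj <| by linear_combination (x - y) * h

namespace FiniteField

variable {F : Type*} [Field F] [Fintype F]

theorem exists_sq_add_mul_add_sq_eq (h3 : (3 : F) ≠ 0) (c : F) : ∃ x y : F, x ^ 2 + x * y + y ^ 2 = c := by
  by_cases h2 : ringChar F = 2
  · obtain ⟨x, hx⟩ := isSquare_of_char_two h2 c
    exact ⟨x, 0, by rw [hx]; ring⟩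
  · have h2F : (2 : F) ≠ 0 := Ring.two_ne_zero h2
    obtain ⟨u, v, huv⟩ := exists_root_sum_quadratic (f := X ^ 2 - C (4 * c)) (g := C 3 * X ^ 2)
      (by compute_degree!) (by compute_degree!) (odd_card_of_char_ne_two h2)
    simp only [eval_sub, eval_mul, eval_pow, eval_X, eval_C] at huv
    -- `4 (x² + x y + y²) = (2x + y)² + 3y²`
    refine ⟨(u - v) / 2, v, ?_⟩
    field_simp
    linear_combination huv

theorem exists_ne_sq_add_mul_add_sq_eq (h3 : (3 : F) ≠ 0) {c : F} (hc : c ≠ 0) :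
    ∃ x y : F, x ≠ y ∧ x ^ 2 + x * y + y ^ 2 = c := by
  obtain ⟨x, y, hxy⟩ := exists_sq_add_mul_add_sq_eq h3 c
  by_cases hne : x = y
  · subst hne
    refine ⟨-2 * x, x, fun h => hc ?_, by linear_combination hxy⟩
    have hx : x = 0 := (mul_eq_zero.mp (by linear_combination -h : 3 * x = 0)).resolve_left h3
    rw [← hxy, hx]
    ring
  · exact ⟨x, y, hne, hxy⟩

end FiniteField

theorem stmt_14 (F : Type*) [Field F] [Fintype F] (hchar : ringChar F ≠ 3)
    (a3 a2 a1 : F) (h3 : a3 ≠ 0)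
    (h : (a2 = 0 ∧ a1 ≠ 0) ∨ (a2 ≠ 0 ∧ a1 = 0)) :
    ¬ Function.Surjective (fun x : F => a3 * x ^ 3 + a2 * x ^ 2 + a1 * x) := by
  rw [← Finite.injective_iff_surjective]
  rcases h with ⟨rfl, h1⟩ | ⟨h2, rfl⟩
  · have h3F : (3 : F) ≠ 0 := fun h0 =>
      hchar (CharP.ringChar_of_prime_eq_zero Nat.prime_three (by exact_mod_cast h0))
    obtain ⟨x, y, hxy, hc⟩ :=
      FiniteField.exists_ne_sq_add_mul_add_sq_eq h3F (c := -a1 / a3) (by simp [h1, h3])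
    exact not_injective_cubic_of_eq_zero hxy (by rw [hc]; field_simp; ring)
  · exact not_injective_cubic_of_eq_zero (x := -a2 / a3) (y := 0) (by simp [h2, h3])
      (by field_simp; ring)
end

section
/- Let g(x) ∈ ℝ[x] have even degree d ≥ 4 with positive leading coefficient, and let 2i+1 > 2j+1 ≥ 1 be two odd indices less than d. If A(2^{2i-2j} - 1) > g(1) + g(-2)·2^{-2j-1}, then for every real B, the polynomial f(x) = g(x) + A x^{2i+1} + B x^{2j+1} has a real root. -/
open Polynomial Filter

theorem stmt_17 (g : Polynomial ℝ) (d : ℕ) (hdeg : g.natDegree = d)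
    (hd4 : 4 ≤ d) (hde : Even d) (hlead : 0 < g.leadingCoeff)
    (i j : ℕ) (hij : j < i) (h1 : 1 ≤ 2 * j + 1) (hid : 2 * i + 1 < d)
    (A : ℝ)
    (hA : A * ((2 : ℝ) ^ (2 * i - 2 * j) - 1) > g.eval 1 + g.eval (-2) / 2 ^ (2 * j + 1)) :
    ∀ B : ℝ, ∃ x : ℝ, g.eval x + A * x ^ (2 * i + 1) + B * x ^ (2 * j + 1) = 0 := by
  intro B
  set F : Polynomial ℝ := g + C A * X ^ (2 * i + 1) + C B * X ^ (2 * j + 1) with hF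
  have hevalF : ∀ x : ℝ, F.eval x = g.eval x + A * x ^ (2 * i + 1) + B * x ^ (2 * j + 1) := by
    intro x; simp [hF]
  have hjd : 2 * j + 1 < d := lt_trans (by omega) hid
  -- coeff d of F equals coeff d of g
  have hcoeff : F.coeff d = g.coeff d := by
    simp only [hF, coeff_add, coeff_C_mul, coeff_X_pow]
    rw [if_neg (by omega : ¬ d = 2 * i + 1), if_neg (by omega : ¬ d = 2 * j + 1)]
    ring
  have hgcoeff : g.coeff d ≠ 0 := by
    rw [← hdeg, coeff_natDegree]
    exact ne_of_gt hlead
  have hnd : F.natDegree = d := by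
    refine le_antisymm ?_ (le_natDegree_of_ne_zero (by rw [hcoeff]; exact hgcoeff))
    refine natDegree_add_le_of_degree_le (natDegree_add_le_of_degree_le (le_of_eq hdeg) ?_) ?_
    · exact le_trans (natDegree_C_mul_X_pow_le A (2 * i + 1)) (le_of_lt hid)
    · exact le_trans (natDegree_C_mul_X_pow_le B (2 * j + 1)) (le_of_lt hjd)
  have hFlead : F.leadingCoeff = g.leadingCoeff := by
    rw [leadingCoeff, hnd, hcoeff, ← hdeg]; rfl
  have hFdeg : 0 < F.degree := by
    rw [← natDegree_pos_iff_degree_pos, hnd]; omega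
  have htend : Tendsto (fun x => F.eval x) atTop atTop :=
    F.tendsto_atTop_of_leadingCoeff_nonneg hFdeg (by rw [hFlead]; exact le_of_lt hlead)
  -- key inequality
  have hp : (0:ℝ) < 2 ^ (2 * j + 1) := by positivity
  have hpow : (2:ℝ) ^ (2 * i + 1) = 2 ^ (2 * j + 1) * 2 ^ (2 * i - 2 * j) := by
    rw [← pow_add]; congr 1; omega
  have hf1 : F.eval 1 = g.eval 1 + A + B := by rw [hevalF]; ring
  have hf2 : F.eval (-2) = g.eval (-2) - A * 2 ^ (2 * i + 1) - B * 2 ^ (2 * j + 1) := by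
    rw [hevalF]
    have h1 : (-2:ℝ) ^ (2 * i + 1) = -(2 ^ (2 * i + 1)) := by
      rw [neg_pow]; simp [pow_succ, pow_mul]
    have h2 : (-2:ℝ) ^ (2 * j + 1) = -(2 ^ (2 * j + 1)) := by
      rw [neg_pow]; simp [pow_succ, pow_mul]
    rw [h1, h2]; ring
  have hkey : F.eval 1 + F.eval (-2) / 2 ^ (2 * j + 1) < 0 := by
    rw [hf1, hf2, hpow]
    have : (g.eval (-2) - A * (2 ^ (2 * j + 1) * 2 ^ (2 * i - 2 * j)) - B * 2 ^ (2 * j + 1))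
        / 2 ^ (2 * j + 1)
        = g.eval (-2) / 2 ^ (2 * j + 1) - A * 2 ^ (2 * i - 2 * j) - B := by
      field_simp
    rw [this]
    nlinarith [hA]
  -- there is a point where F is nonpositive
  have hneg : F.eval 1 ≤ 0 ∨ F.eval (-2) ≤ 0 := by
    by_contra h
    push_neg at h
    have := div_pos h.2 hp
    linarith
  -- get a point where F is nonnegative
  obtain ⟨M, hM⟩ := (htend.eventually_ge_atTop 0).exists_forall_of_atTop
  obtain ⟨x0, hx0le, hx0⟩ : ∃ x0 : ℝ, x0 ≤ max M 1 ∧ F.eval x0 ≤ 0 := by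
    rcases hneg with h | h
    · exact ⟨1, le_max_right _ _, h⟩
    · exact ⟨-2, le_trans (by norm_num) (le_max_right _ _), h⟩
  have hcont : ContinuousOn (fun x => F.eval x) (Set.Icc x0 (max M 1)) :=
    (F.continuous_aeval).continuousOn
  have hge : 0 ≤ F.eval (max M 1) := hM _ (le_max_left _ _)
  obtain ⟨x, _, hx⟩ := intermediate_value_Icc hx0le hcont ⟨hx0, hge⟩
  exact ⟨x, by rw [← hevalF]; exact hx⟩
end

section
/- For every integer d ≥ 2 and every finite field 𝔽_q with q > d, and for each index i with 0 ≤ i ≤ d, given fixed coefficients a_j ∈ 𝔽_q for j ≠ i (with a_0 ≠ 0 if i ≠ 0 and a_d ≠ 0 if i ≠ d), there exists a_i ∈ 𝔽_q (nonzero if i ∈ {0, d}) such that the polynomial Σ a_j x^j of degree d has a root in 𝔽_q. -/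
open Polynomial in
theorem stmt_19 (F : Type*) [Field F] [Fintype F]
    (d i : ℕ) (hd : 2 ≤ d) (hq : d < Fintype.card F) (hi : i ≤ d)
    (a : ℕ → F) (h0 : i ≠ 0 → a 0 ≠ 0) (hdd : i ≠ d → a d ≠ 0) :
    ∃ c : F, ((i = 0 ∨ i = d) → c ≠ 0) ∧
      ∃ r : F, ∑ j ∈ Finset.range (d + 1), Function.update a i c j * r ^ j = 0 := by
  classical
  set s := (Finset.range (d+1)).erase i with hs
  set p : Polynomial F := ∑ j ∈ s, Polynomial.C (a j) * Polynomial.X ^ j with hp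
  have hmem : i ∈ Finset.range (d+1) := Finset.mem_range.2 (Nat.lt_succ_of_le hi)
  have hsum : ∀ c r : F, ∑ j ∈ Finset.range (d + 1), Function.update a i c j * r ^ j
      = c * r ^ i + p.eval r := by
    intro c r
    rw [← Finset.add_sum_erase _ _ hmem, Function.update_self, hp, eval_finset_sum]
    congr 1
    refine Finset.sum_congr rfl fun j hj => ?_
    rw [Function.update_of_ne (Finset.ne_of_mem_erase hj)]
    simp
  have hcoeff : ∀ k, p.coeff k = if k ∈ s then a k else 0 := by
    intro k
    rw [hp, Polynomial.finset_sum_coeff]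
    simp only [Polynomial.coeff_C_mul, Polynomial.coeff_X_pow, mul_ite, mul_one, mul_zero]
    rw [Finset.sum_ite_eq s k a]
  have hcard : ∀ (f : Polynomial F), f.natDegree ≤ d → (f.natDegree : Cardinal) < Cardinal.mk F := by
    intro f hf
    rw [Cardinal.mk_fintype]
    exact_mod_cast lt_of_le_of_lt hf hq
  rcases eq_or_ne i 0 with h0' | h0'
  · -- i = 0
    subst h0'
    have hds : d ∈ s := Finset.mem_erase.2 ⟨by omega, Finset.mem_range.2 (by omega)⟩
    have hpne : p ≠ 0 := fun h => (hdd (by omega)) (by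
      have := hcoeff d; rw [h] at this; simpa [hds] using this.symm)
    have hdeg : p.natDegree ≤ d := by
      refine Polynomial.natDegree_sum_le_of_forall_le _ _ fun j hj => ?_
      refine le_trans (Polynomial.natDegree_C_mul_le _ _) ?_
      simpa using Nat.lt_succ_iff.mp (Finset.mem_range.mp (Finset.mem_of_mem_erase hj))
    obtain ⟨r, hr⟩ := p.exists_eval_ne_zero_of_natDegree_lt_card hpne (hcard p hdeg)
    exact ⟨-p.eval r, fun _ => neg_ne_zero.2 hr, r, by rw [hsum]; ring⟩
  rcases eq_or_ne i d with hd' | hd'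
  · -- i = d
    subst hd'
    have h0s : 0 ∈ s := Finset.mem_erase.2 ⟨by omega, Finset.mem_range.2 (by omega)⟩
    have hpne : p ≠ 0 := fun h => (h0 h0') (by
      have := hcoeff 0; rw [h] at this; simpa [h0s] using this.symm)
    have hdeg : p.natDegree ≤ i - 1 := by
      refine Polynomial.natDegree_sum_le_of_forall_le _ _ fun j hj => ?_
      refine le_trans (Polynomial.natDegree_C_mul_le _ _) ?_
      have h1 := Finset.mem_erase.mp hj
      have h2 := Finset.mem_range.mp h1.2
      simp only [Polynomial.natDegree_X_pow]
      omega
    have hqne : (Polynomial.X * p : Polynomial F) ≠ 0 := by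
      exact mul_ne_zero Polynomial.X_ne_zero hpne
    have hqdeg : (Polynomial.X * p).natDegree ≤ i := by
      rw [Polynomial.natDegree_mul Polynomial.X_ne_zero hpne, Polynomial.natDegree_X]
      omega
    obtain ⟨r, hr⟩ := (Polynomial.X * p).exists_eval_ne_zero_of_natDegree_lt_card hqne
      (hcard _ hqdeg)
    rw [Polynomial.eval_mul, Polynomial.eval_X] at hr
    have hr0 : r ≠ 0 := fun h => hr (by simp [h])
    have hpr : p.eval r ≠ 0 := fun h => hr (by simp [h])
    refine ⟨-p.eval r / r ^ i, fun _ => div_ne_zero (neg_ne_zero.2 hpr) (pow_ne_zero _ hr0),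
      r, ?_⟩
    rw [hsum, div_mul_cancel₀ _ (pow_ne_zero _ hr0)]
    ring
  · exact ⟨-p.eval 1, fun h => by tauto, 1, by rw [hsum]; ring⟩
end
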